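/- arXiv:1601.04492 — 6 statements merged into one kernel-verified Lean document; each statement's English description precedes it below -/
import Mathlib

section
/- Let n ≥ 1, p ∈ ℝ with p ≠ 1, c > 0, and let w be the fundamental solution of the p-Laplace equation, i.e. w(x) = v(|x|) with v'(r) = −c·r^{(1−n)/(p−1)}. Let N ≥ 1, a_1,…,a_N > 0, and y_1,…,y_N ∈ ℝⁿ, and define V(x) := Σ_{i=1}^N a_i w(x − y_i). Then at every point x with x ≠ y_i for all i and ∇V(x) ≠ 0, one has Δ_p V(x) = −c·((p−2)(p+n−2)/(p−1))·|∇V(x)|^{p−2}·Σ_{i=1}^N a_i·sin²θ_i / |x − y_i|^{(p+n−2)/(p−1)}, where sin²θ_i := 1 − ⟨x − y_i, ∇V(x)⟩²/(|x − y_i|²·|∇V(x)|²). -/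
/-!
For a radial profile with `φ'(r) = r g(r)`, the gradient of `z ↦ φ ‖z - y‖` is `g(r) (z - y)` and
its Hessian is `g(r) I + (g'(r) / r) (z - y) ⊗ (z - y)`, where `r = ‖z - y‖`. The fundamental
solution has `g(r) = -c r^(-β)` with `β = (p + n - 2) / (p - 1)`, so `r g'(r) = -β g(r)`. The
Laplacian of the `i`-th term is then `(n - β) g`, its Hessian at `∇V` is
`g (‖∇V‖² - β ⟨x - yᵢ, ∇V⟩² / r²)`, and since `p - 2 + n - β = β (p - 2)` the two combine in
`Δ_p V` to `-c β (p - 2) aᵢ sin²θᵢ / r^β`.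
-/

open Filter Topology RealInnerProductSpace

/-- The Hessian of `u` at `x`, as a bilinear form evaluated at `(v, w)`. -/
noncomputable def hess {n : ℕ} (u : EuclideanSpace ℝ (Fin n) → ℝ)
    (x v w : EuclideanSpace ℝ (Fin n)) : ℝ :=
  iteratedFDeriv ℝ 2 u x ![v, w]

/-- The Laplacian of `u` at `x`: the trace of the Hessian. -/
noncomputable def lap {n : ℕ} (u : EuclideanSpace ℝ (Fin n) → ℝ)
    (x : EuclideanSpace ℝ (Fin n)) : ℝ :=
  ∑ i, hess u x (EuclideanSpace.single i 1) (EuclideanSpace.single i 1)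

/-- The `p`-Laplacian of `u` at a point `x` where `∇u(x) ≠ 0`:
`Δ_p u(x) = |∇u(x)|^{p−2}·((p−2)·⟨∇u(x), (Hu(x))∇u(x)⟩/|∇u(x)|² + Δu(x))`. -/
noncomputable def pLap {n : ℕ} (p : ℝ) (u : EuclideanSpace ℝ (Fin n) → ℝ)
    (x : EuclideanSpace ℝ (Fin n)) : ℝ :=
  ‖gradient u x‖ ^ (p - 2) *
    ((p - 2) * hess u x (gradient u x) (gradient u x) / ‖gradient u x‖ ^ 2 + lap u x)

section Radial

variable {E : Type*} [NormedAddCommGroup E] [InnerProductSpace ℝ E]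

theorem hasFDerivAt_norm_sub {x y : E} (h : x ≠ y) :
    HasFDerivAt (fun z => ‖z - y‖) (‖x - y‖⁻¹ • innerSL ℝ (x - y)) x := by
  have hpos : 0 < ‖x - y‖ := norm_pos_iff.2 (sub_ne_zero.2 h)
  have hsq : HasFDerivAt (fun z : E => ‖z - y‖ ^ 2) (2 • innerSL ℝ (x - y)) x := by
    simpa using ((hasFDerivAt_id x).sub_const y).norm_sq
  have hsqrt := (Real.hasDerivAt_sqrt (pow_pos hpos 2).ne').comp_hasFDerivAt x hsq
  simp only [Function.comp_def, Real.sqrt_sq (norm_nonneg _)] at hsqrt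
  refine hsqrt.congr_fderiv ?_
  ext w
  simp only [one_div, mul_inv_rev, map_sub, smul_apply, sub_apply, coe_innerSL_apply, nsmul_eq_mul,
    Nat.cast_ofNat, smul_eq_mul]
  field_simp

theorem hasFDerivAt_comp_norm_sub {φ g : ℝ → ℝ} {x y : E} (h : x ≠ y)
    (hφ : HasDerivAt φ (‖x - y‖ * g ‖x - y‖) ‖x - y‖) :
    HasFDerivAt (fun z => φ ‖z - y‖) (g ‖x - y‖ • innerSL ℝ (x - y)) x := by
  have hpos : 0 < ‖x - y‖ := norm_pos_iff.2 (sub_ne_zero.2 h)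
  refine (hφ.comp_hasFDerivAt x (hasFDerivAt_norm_sub h)).congr_fderiv ?_
  rw [smul_smul]
  congr 1
  field_simp

/-- `innerSL ℝ` retyped from `E →L⋆[ℝ] E →L[ℝ] ℝ` to `E →L[ℝ] E →L[ℝ] ℝ`: the two types agree only
up to unfolding `starRingEnd ℝ`, which instance search does not do when adding bilinear maps. -/
noncomputable abbrev innerSLReal : E →L[ℝ] E →L[ℝ] ℝ := innerSL ℝ

theorem innerSLReal_apply_apply (u w : E) : innerSLReal u w = ⟪u, w⟫ := rfl

theorem hasFDerivAt_comp_norm_sub_smul_innerSL {g : ℝ → ℝ} {g' : ℝ} {x y : E} (h : x ≠ y)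
    (hg : HasDerivAt g g' ‖x - y‖) :
    HasFDerivAt (fun z => g ‖z - y‖ • innerSL ℝ (z - y))
      (g ‖x - y‖ • innerSLReal +
        ((g' / ‖x - y‖) • innerSL ℝ (x - y)).smulRight (innerSL ℝ (x - y))) x := by
  have hscalar := hg.comp_hasFDerivAt x (hasFDerivAt_norm_sub h)
  have hinner : HasFDerivAt (fun z : E => innerSL ℝ (z - y)) innerSLReal x :=
    (innerSL ℝ).hasFDerivAt.comp x ((hasFDerivAt_id x).sub_const y)
  refine (hscalar.smul hinner).congr_fderiv ?_
  rw [smul_smul, div_eq_mul_inv]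
  rfl

theorem iteratedFDeriv_two_apply_of_eventuallyEq {f : E → ℝ} {F : E → E →L[ℝ] ℝ}
    {B : E →L[ℝ] E →L[ℝ] ℝ} {x : E} (hF : fderiv ℝ f =ᶠ[𝓝 x] F) (hB : HasFDerivAt F B x)
    (u w : E) : iteratedFDeriv ℝ 2 f x ![u, w] = B u w := by
  rw [iteratedFDeriv_two_apply, hF.fderiv_eq, hB.fderiv]
  rfl

theorem iteratedFDeriv_two_sum_comp_norm_sub {ι : Type*} [Fintype ι] {φ g g' : ℝ → ℝ}
    (hφ : ∀ r, 0 < r → HasDerivAt φ (r * g r) r) (hg : ∀ r, 0 < r → HasDerivAt g (g' r) r)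
    (a : ι → ℝ) (y : ι → E) {x : E} (hx : ∀ i, x ≠ y i) (u w : E) :
    iteratedFDeriv ℝ 2 (fun z => ∑ i, a i * φ ‖z - y i‖) x ![u, w] =
      ∑ i, a i * (g ‖x - y i‖ * ⟪u, w⟫ +
        g' ‖x - y i‖ / ‖x - y i‖ * ⟪x - y i, u⟫ * ⟪x - y i, w⟫) := by
  have hpos : ∀ {z : E} i, z ≠ y i → 0 < ‖z - y i‖ := fun i h => norm_pos_iff.2 (sub_ne_zero.2 h)
  have hfderiv : fderiv ℝ (fun z => ∑ i, a i * φ ‖z - y i‖) =ᶠ[𝓝 x]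
      fun z => ∑ i, a i • g ‖z - y i‖ • innerSL ℝ (z - y i) := by
    filter_upwards [eventually_all.2 fun i => eventually_ne_nhds (hx i)] with z hz
    exact (HasFDerivAt.fun_sum fun i _ =>
      (hasFDerivAt_comp_norm_sub (hz i) (hφ _ (hpos i (hz i)))).const_mul (a i)).fderiv
  have hsecond := HasFDerivAt.fun_sum (u := Finset.univ) fun i _ =>
    (hasFDerivAt_comp_norm_sub_smul_innerSL (hx i) (hg _ (hpos i (hx i)))).const_smul (a i)
  rw [iteratedFDeriv_two_apply_of_eventuallyEq hfderiv hsecond]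
  simp only [sum_apply, smul_apply, add_apply, ContinuousLinearMap.smulRight_apply,
    innerSLReal_apply_apply, innerSL_apply_apply, smul_eq_mul]

end Radial

theorem lap_sum_comp_norm_sub {n : ℕ} {ι : Type*} [Fintype ι] {φ g g' : ℝ → ℝ}
    (hφ : ∀ r, 0 < r → HasDerivAt φ (r * g r) r) (hg : ∀ r, 0 < r → HasDerivAt g (g' r) r)
    (a : ι → ℝ) (y : ι → EuclideanSpace ℝ (Fin n)) {x : EuclideanSpace ℝ (Fin n)}
    (hx : ∀ i, x ≠ y i) :
    lap (fun z => ∑ i, a i * φ ‖z - y i‖) x =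
      ∑ i, a i * (n * g ‖x - y i‖ + g' ‖x - y i‖ * ‖x - y i‖) := by
  have hsq (z : EuclideanSpace ℝ (Fin n)) :
      ∑ j, ⟪z, EuclideanSpace.single j 1⟫ * ⟪z, EuclideanSpace.single j 1⟫ = ‖z‖ ^ 2 := by
    simpa [real_inner_comm _ z] using (EuclideanSpace.basisFun (Fin n) ℝ).sum_inner_mul_inner z z
  simp only [lap, hess, iteratedFDeriv_two_sum_comp_norm_sub hφ hg a y hx]
  rw [Finset.sum_comm]
  refine Finset.sum_congr rfl fun i _ => ?_
  have hpos : 0 < ‖x - y i‖ := norm_pos_iff.2 (sub_ne_zero.2 (hx i))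
  simp_rw [← Finset.mul_sum, Finset.sum_add_distrib, ← Finset.mul_sum, mul_assoc,
    ← Finset.mul_sum, hsq]
  simp only [real_inner_self_eq_norm_sq, PiLp.norm_single, norm_one, one_pow,
    Finset.sum_const, Finset.card_univ, Fintype.card_fin, nsmul_eq_mul, mul_one]
  field_simp

theorem hasDerivAt_const_mul_rpow_neg (c β : ℝ) {r : ℝ} (hr : 0 < r) :
    HasDerivAt (fun s => -c * s ^ (-β)) (c * β * r ^ (-β) / r) r := by
  refine ((Real.hasDerivAt_rpow_const (p := -β) (Or.inl hr.ne')).const_mul (-c)).congr_deriv ?_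
  rw [Real.rpow_sub_one hr.ne']
  ring

theorem hasDerivAt_of_deriv_eq_rpow {v : ℝ → ℝ} {c β : ℝ} (hv : DifferentiableOn ℝ v (Set.Ioi 0))
    (hv' : ∀ r : ℝ, 0 < r → deriv v r = -c * r ^ (1 - β)) {r : ℝ} (hr : 0 < r) :
    HasDerivAt v (r * (-c * r ^ (-β))) r := by
  have hd := (hv.differentiableAt (Ioi_mem_nhds hr)).hasDerivAt
  rwa [hv' r hr, sub_eq_add_neg, Real.rpow_add hr, Real.rpow_one, mul_left_comm] at hd

theorem pLap_summand_of_rpow_profile {p n c β a r s q : ℝ} (hp : p ≠ 1)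
    (hβ : β = (p + n - 2) / (p - 1)) (hr : 0 < r) (hs : s ≠ 0) :
    (p - 2) * (a * (-c * r ^ (-β) * s ^ 2 + c * β * r ^ (-β) / r / r * q * q)) / s ^ 2 +
        a * (n * (-c * r ^ (-β)) + c * β * r ^ (-β) / r * r) =
      -c * ((p - 2) * (p + n - 2) / (p - 1)) * (a * (1 - q ^ 2 / (r ^ 2 * s ^ 2)) / r ^ β) := by
  have hp1 : p - 1 ≠ 0 := sub_ne_zero.2 hp
  have hrβ : r ^ β ≠ 0 := (Real.rpow_pos_of_pos hr β).ne'
  rw [Real.rpow_neg hr.le]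
  subst hβ
  field_simp
  ring

theorem stmt4_general {n : ℕ} (p c : ℝ) (hp : p ≠ 1)
    (v : ℝ → ℝ) (hv : ContDiffOn ℝ 2 v (Set.Ioi 0))
    (hv' : ∀ r : ℝ, 0 < r → deriv v r = -c * r ^ ((1 - n) / (p - 1)))
    (N : ℕ) (a : Fin N → ℝ)
    (y : Fin N → EuclideanSpace ℝ (Fin n))
    (V : EuclideanSpace ℝ (Fin n) → ℝ) (hV : V = fun z => ∑ i, a i * v ‖z - y i‖)
    (x : EuclideanSpace ℝ (Fin n)) (hx : ∀ i, x ≠ y i) (hgrad : gradient V x ≠ 0) :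
    pLap p V x =
      -c * ((p - 2) * (p + n - 2) / (p - 1)) * ‖gradient V x‖ ^ (p - 2) *
        ∑ i, a i *
          (1 - ⟪x - y i, gradient V x⟫ ^ 2 / (‖x - y i‖ ^ 2 * ‖gradient V x‖ ^ 2)) /
          ‖x - y i‖ ^ ((p + n - 2) / (p - 1)) := by
  subst hV
  set β := (p + n - 2) / (p - 1)
  have hexp : (1 - n) / (p - 1) = 1 - β := by
    simp only [β]
    field_simp [sub_ne_zero.2 hp]
    ring
  have hφ r (hr : 0 < r) := hasDerivAt_of_deriv_eq_rpow (hv.differentiableOn (by norm_num))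
    (hexp ▸ hv') hr
  have hg r (hr : 0 < r) := hasDerivAt_const_mul_rpow_neg c β hr
  rw [pLap, hess, iteratedFDeriv_two_sum_comp_norm_sub hφ hg a y hx,
    lap_sum_comp_norm_sub hφ hg a y hx, real_inner_self_eq_norm_sq, Finset.mul_sum, Finset.sum_div,
    ← Finset.sum_add_distrib, Finset.mul_sum, Finset.mul_sum]
  refine Finset.sum_congr rfl fun i _ => ?_
  rw [pLap_summand_of_rpow_profile hp rfl (norm_pos_iff.2 (sub_ne_zero.2 (hx i)))
    (norm_ne_zero_iff.2 hgrad)]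
  ring

/-- explicit formula for the p-Laplacian of a superposition
`V(x) = Σ aᵢ w(x − yᵢ)` of translates of the fundamental solution `w(x) = v(|x|)`,
`v'(r) = −c·r^{(1−n)/(p−1)}`:
`Δ_p V(x) = −c·((p−2)(p+n−2)/(p−1))·|∇V(x)|^{p−2}·Σ aᵢ sin²θᵢ/|x−yᵢ|^{(p+n−2)/(p−1)}`,
wherever `x ≠ yᵢ` for all `i` and `∇V(x) ≠ 0`. -/
theorem stmt4 {n : ℕ} (hn : 1 ≤ n) (p c : ℝ) (hp : p ≠ 1) (hc : 0 < c)
    (v : ℝ → ℝ) (hv : ContDiffOn ℝ 2 v (Set.Ioi 0))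
    (hv' : ∀ r : ℝ, 0 < r → deriv v r = -c * r ^ ((1 - n) / (p - 1)))
    (N : ℕ) (hN : 1 ≤ N) (a : Fin N → ℝ) (ha : ∀ i, 0 < a i)
    (y : Fin N → EuclideanSpace ℝ (Fin n))
    (V : EuclideanSpace ℝ (Fin n) → ℝ) (hV : V = fun z => ∑ i, a i * v ‖z - y i‖)
    (x : EuclideanSpace ℝ (Fin n)) (hx : ∀ i, x ≠ y i) (hgrad : gradient V x ≠ 0) :
    pLap p V x =
      -c * ((p - 2) * (p + n - 2) / (p - 1)) * ‖gradient V x‖ ^ (p - 2) *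
        ∑ i, a i *
          (1 - ⟪x - y i, gradient V x⟫ ^ 2 / (‖x - y i‖ ^ 2 * ‖gradient V x‖ ^ 2)) /
          ‖x - y i‖ ^ ((p + n - 2) / (p - 1)) :=
  stmt4_general p c hp v hv hv' N a y V hV x hx hgrad
end

section
/- Let n ≥ 1, p ∈ ℝ with p ≠ 1, c > 0, and let w be the fundamental solution of the p-Laplace equation, i.e. w(x) = v(|x|) with v'(r) = −c·r^{(1−n)/(p−1)}. Let a_1,…,a_N > 0, y_1,…,y_N ∈ ℝⁿ, and V(x) := Σ_{i=1}^N a_i w(x − y_i). Then Δ_p V has constant sign wherever it is defined: at every x with x ≠ y_i for all i and ∇V(x) ≠ 0, (a) if (p−2)(p+n−2)/(p−1) > 0 then Δ_p V(x) ≤ 0; (b) if (p−2)(p+n−2)/(p−1) < 0 then Δ_p V(x) ≥ 0; (c) if p = 2, or n = 1, or p + n = 2, then Δ_p V(x) = 0. -/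
open Filter Topology RealInnerProductSpace

section RadialCalculus

variable {E : Type*} [NormedAddCommGroup E] [InnerProductSpace ℝ E]

theorem hasFDerivAt_norm_rpow_of_ne_zero {x : E} (hx : x ≠ 0) (γ : ℝ) :
    HasFDerivAt (fun w : E => ‖w‖ ^ γ) ((γ * ‖x‖ ^ (γ - 2)) • innerSL ℝ x) x := by
  have hpow : ∀ (w : E) (s : ℝ), (‖w‖ ^ 2) ^ s = ‖w‖ ^ (2 * s) := fun w s => by
    rw [← Real.rpow_natCast_mul (norm_nonneg w)]; norm_num
  have hsq := (hasStrictFDerivAt_norm_sq x).hasFDerivAt.rpow_const (p := γ / 2)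
    (Or.inl (by positivity))
  simp only [hpow, mul_div_cancel₀ γ two_ne_zero] at hsq
  convert hsq using 1
  rw [← Nat.cast_smul_eq_nsmul ℝ, smul_smul]
  ring_nf

theorem hasFDerivAt_norm_sub_rpow {y z : E} (hz : z ≠ y) (γ : ℝ) :
    HasFDerivAt (fun w : E => ‖w - y‖ ^ γ) ((γ * ‖z - y‖ ^ (γ - 2)) • innerSL ℝ (z - y)) z := by
  simpa only [Function.comp_def, ContinuousLinearMap.comp_id, id_eq] using
    (hasFDerivAt_norm_rpow_of_ne_zero (sub_ne_zero.2 hz) γ).comp z ((hasFDerivAt_id z).sub_const y)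

theorem hasFDerivAt_norm_sub_rpow_smul {y z : E} (hz : z ≠ y) (γ : ℝ) :
    HasFDerivAt (fun w : E => ‖w - y‖ ^ γ • (w - y))
      (‖z - y‖ ^ γ • ContinuousLinearMap.id ℝ E +
        ((γ * ‖z - y‖ ^ (γ - 2)) • innerSL ℝ (z - y)).smulRight (z - y)) z :=
  (hasFDerivAt_norm_sub_rpow hz γ).smul ((hasFDerivAt_id z).sub_const y)

variable [CompleteSpace E]

theorem hasGradientAt_comp_norm_sub {v : ℝ → ℝ} {c β : ℝ}
    (hv : ∀ r, 0 < r → HasDerivAt v (-c * r ^ β) r) {y z : E} (hz : z ≠ y) :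
    HasGradientAt (fun w : E => v ‖w - y‖) ((-c * ‖z - y‖ ^ (β - 1)) • (z - y)) z := by
  have hr : 0 < ‖z - y‖ := norm_pos_iff.2 (sub_ne_zero.2 hz)
  have hnorm := hasFDerivAt_norm_sub_rpow hz 1
  simp only [Real.rpow_one] at hnorm
  have h := (hv _ hr).comp_hasFDerivAt z hnorm
  have hd : (-c * ‖z - y‖ ^ β) • (1 * ‖z - y‖ ^ (1 - 2 : ℝ)) • innerSL ℝ (z - y) =
      innerSL ℝ ((-c * ‖z - y‖ ^ (β - 1)) • (z - y)) := by
    rw [map_smul, smul_smul, one_mul, mul_assoc, ← Real.rpow_add hr]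
    ring_nf
  rwa [hd] at h

theorem iteratedFDeriv_two_apply_of_hasGradientAt {u : E → ℝ} {F : E → E} {F' : E →L[ℝ] E}
    {x : E} (hu : ∀ᶠ z in 𝓝 x, HasGradientAt u (F z) z) (hF : HasFDerivAt F F' x) (q w : E) :
    iteratedFDeriv ℝ 2 u x ![q, w] = ⟪F' q, w⟫ := by
  have hfd : fderiv ℝ u =ᶠ[𝓝 x] fun z => innerSL ℝ (F z) :=
    hu.mono fun z hz => hz.hasFDerivAt.fderiv
  have hd : HasFDerivAt (fun z => innerSL ℝ (F z)) ((innerSL ℝ).comp F') x :=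
    (innerSL ℝ).hasFDerivAt.comp x hF
  rw [iteratedFDeriv_two_apply, hfd.fderiv_eq, hd.fderiv]
  simp

end RadialCalculus

section Superposition

variable {E ι : Type*} [NormedAddCommGroup E] [InnerProductSpace ℝ E] [Fintype ι] {c β : ℝ}

theorem hasGradientAt_superposition [CompleteSpace E] {v : ℝ → ℝ}
    (hv : ∀ r, 0 < r → HasDerivAt v (-c * r ^ β) r) (a : ι → ℝ) (y : ι → E) {z : E}
    (hz : ∀ i, z ≠ y i) :
    HasGradientAt (fun w => ∑ i, a i * v ‖w - y i‖)
      (∑ i, (a i * -c) • ‖z - y i‖ ^ (β - 1) • (z - y i)) z := by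
  rw [hasGradientAt_iff_hasFDerivAt, map_sum]
  refine HasFDerivAt.fun_sum fun i _ => ?_
  have h := (hasGradientAt_comp_norm_sub hv (hz i)).hasFDerivAt.const_mul (a i)
  rw [← map_smul] at h
  simpa only [smul_smul, mul_assoc] using h

theorem hasFDerivAt_superposition_gradient (a : ι → ℝ) (y : ι → E) {x : E}
    (hx : ∀ i, x ≠ y i) :
    HasFDerivAt (fun z => ∑ i, (a i * -c) • ‖z - y i‖ ^ (β - 1) • (z - y i))
      (∑ i, (a i * -c) • (‖x - y i‖ ^ (β - 1) • ContinuousLinearMap.id ℝ E +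
        (((β - 1) * ‖x - y i‖ ^ (β - 1 - 2)) • innerSL ℝ (x - y i)).smulRight (x - y i))) x :=
  HasFDerivAt.fun_sum fun i _ => (hasFDerivAt_norm_sub_rpow_smul (hx i) _).const_smul _

end Superposition

section EuclideanSpace

variable {n : ℕ} {ι : Type*} [Fintype ι]

theorem hess_superposition {v : ℝ → ℝ} {c β : ℝ} (hv : ∀ r, 0 < r → HasDerivAt v (-c * r ^ β) r)
    (a : ι → ℝ) (y : ι → EuclideanSpace ℝ (Fin n)) {x : EuclideanSpace ℝ (Fin n)}
    (hx : ∀ i, x ≠ y i) (q w : EuclideanSpace ℝ (Fin n)) :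
    hess (fun z => ∑ i, a i * v ‖z - y i‖) x q w =
      ∑ i, (a i * -c * ‖x - y i‖ ^ (β - 1) * ⟪q, w⟫ +
        a i * -c * (β - 1) * ‖x - y i‖ ^ (β - 1 - 2) * ⟪x - y i, q⟫ * ⟪x - y i, w⟫) := by
  have hnear : ∀ᶠ z in 𝓝 x, ∀ i, z ≠ y i := eventually_all.2 fun i => eventually_ne_nhds (hx i)
  rw [hess, iteratedFDeriv_two_apply_of_hasGradientAt
    (hnear.mono fun z hz => hasGradientAt_superposition hv a y hz)
    (hasFDerivAt_superposition_gradient a y hx), sum_apply, sum_inner]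
  refine Finset.sum_congr rfl fun i _ => ?_
  simp only [smul_add, add_apply, smul_apply, ContinuousLinearMap.id_apply,
    ContinuousLinearMap.smulRight_apply, innerSL_apply_apply, smul_eq_mul, inner_add_left,
    real_inner_smul_left]
  ring

theorem lap_eq_of_hess_eq {u : EuclideanSpace ℝ (Fin n) → ℝ} {x : EuclideanSpace ℝ (Fin n)}
    (α γ : ι → ℝ) (e : ι → EuclideanSpace ℝ (Fin n))
    (h : ∀ q w, hess u x q w = ∑ i, (α i * ⟪q, w⟫ + γ i * ⟪e i, q⟫ * ⟪e i, w⟫)) :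
    lap u x = ∑ i, (α i * n + γ i * ‖e i‖ ^ 2) := by
  set b := EuclideanSpace.basisFun (Fin n) ℝ
  have hb : ∀ j, EuclideanSpace.single j 1 = b j := fun j => (EuclideanSpace.basisFun_apply ..).symm
  simp only [lap, h, hb]
  rw [Finset.sum_comm]
  refine Finset.sum_congr rfl fun i _ => ?_
  have hnorm : ∀ j, ⟪b j, b j⟫ = 1 := fun j => by
    rw [real_inner_self_eq_norm_sq, b.orthonormal.1 j, one_pow]
  have hparseval : ∑ j, ⟪e i, b j⟫ * ⟪e i, b j⟫ = ‖e i‖ ^ 2 := by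
    simpa only [real_inner_comm (e i), real_inner_self_eq_norm_sq] using
      b.sum_inner_mul_inner (e i) (e i)
  simp only [mul_assoc, ← Finset.mul_sum, Finset.sum_add_distrib, hnorm, hparseval,
    Finset.sum_const, Finset.card_univ, Fintype.card_fin, nsmul_eq_mul]
  ring

theorem pLap_eq_of_hess_eq {u : EuclideanSpace ℝ (Fin n) → ℝ} {x : EuclideanSpace ℝ (Fin n)}
    (p : ℝ) (α γ : ι → ℝ) (e : ι → EuclideanSpace ℝ (Fin n)) (hG : gradient u x ≠ 0)
    (h : ∀ q w, hess u x q w = ∑ i, (α i * ⟪q, w⟫ + γ i * ⟪e i, q⟫ * ⟪e i, w⟫)) :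
    pLap p u x = ‖gradient u x‖ ^ (p - 2) * ∑ i, (α i * (p - 2 + n) +
      γ i * ((p - 2) * ⟪e i, gradient u x⟫ ^ 2 / ‖gradient u x‖ ^ 2 + ‖e i‖ ^ 2)) := by
  have hG2 : ‖gradient u x‖ ^ 2 ≠ 0 := by positivity
  rw [pLap, lap_eq_of_hess_eq α γ e h, h, real_inner_self_eq_norm_sq, Finset.mul_sum,
    Finset.sum_div, ← Finset.sum_add_distrib]
  congr 1
  refine Finset.sum_congr rfl fun i _ => ?_
  field_simp
  ring

theorem sin_angle_eq_zero_of_fin_one {u w : EuclideanSpace ℝ (Fin 1)} (hu : u ≠ 0) (hw : w ≠ 0) :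
    Real.sin (InnerProductGeometry.angle u w) = 0 := by
  have h : ⟪u, u⟫ * ⟪w, w⟫ - ⟪u, w⟫ * ⟪u, w⟫ = 0 := by
    simp only [PiLp.inner_apply, RCLike.inner_apply, conj_trivial, Fin.sum_univ_one]
    ring
  rw [InnerProductGeometry.sin_angle hu hw, h, Real.sqrt_zero, zero_div]

theorem pLap_superposition {p c : ℝ} (hp : p ≠ 1) {v : ℝ → ℝ}
    (hv : ∀ r, 0 < r → HasDerivAt v (-c * r ^ ((1 - n) / (p - 1))) r)
    (a : ι → ℝ) (y : ι → EuclideanSpace ℝ (Fin n)) {x : EuclideanSpace ℝ (Fin n)}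
    (hx : ∀ i, x ≠ y i) (hG : gradient (fun z => ∑ i, a i * v ‖z - y i‖) x ≠ 0) :
    pLap p (fun z => ∑ i, a i * v ‖z - y i‖) x =
      -(c * ((p - 2) * (p + n - 2) / (p - 1))) *
        (‖gradient (fun z => ∑ i, a i * v ‖z - y i‖) x‖ ^ (p - 2) *
          ∑ i, a i * ‖x - y i‖ ^ ((1 - n) / (p - 1) - 1) *
            Real.sin (InnerProductGeometry.angle (x - y i)
              (gradient (fun z => ∑ i, a i * v ‖z - y i‖) x)) ^ 2) := by
  rw [pLap_eq_of_hess_eq p _ _ (fun i => x - y i) hG (hess_superposition hv a y hx)]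
  set G := gradient (fun z => ∑ i, a i * v ‖z - y i‖) x
  have hp1 : p - 1 ≠ 0 := sub_ne_zero.2 hp
  have hG0 : 0 < ‖G‖ := norm_pos_iff.2 hG
  have hterm : ∀ i, a i * -c * ‖x - y i‖ ^ ((1 - n) / (p - 1) - 1) * (p - 2 + n) +
      a i * -c * ((1 - n) / (p - 1) - 1) * ‖x - y i‖ ^ ((1 - n) / (p - 1) - 1 - 2) *
        ((p - 2) * ⟪x - y i, G⟫ ^ 2 / ‖G‖ ^ 2 + ‖x - y i‖ ^ 2) =
      -(c * ((p - 2) * (p + n - 2) / (p - 1))) * (a i * ‖x - y i‖ ^ ((1 - n) / (p - 1) - 1) *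
        Real.sin (InnerProductGeometry.angle (x - y i) G) ^ 2) := fun i => by
    have hr : 0 < ‖x - y i‖ := norm_pos_iff.2 (sub_ne_zero.2 (hx i))
    rw [← InnerProductGeometry.cos_angle_mul_norm_mul_norm, Real.sin_sq,
      Real.rpow_sub hr _ 2, Real.rpow_two]
    field_simp
    ring
  rw [Finset.sum_congr rfl fun i _ => hterm i, ← Finset.mul_sum]
  ring

end EuclideanSpace

theorem stmt5_general {n : ℕ} (p c : ℝ) (hp : p ≠ 1) (hc : 0 < c)
    (v : ℝ → ℝ) (hv : ContDiffOn ℝ 2 v (Set.Ioi 0))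
    (hv' : ∀ r : ℝ, 0 < r → deriv v r = -c * r ^ ((1 - n) / (p - 1)))
    (N : ℕ) (a : Fin N → ℝ) (ha : ∀ i, 0 < a i)
    (y : Fin N → EuclideanSpace ℝ (Fin n))
    (V : EuclideanSpace ℝ (Fin n) → ℝ) (hV : V = fun z => ∑ i, a i * v ‖z - y i‖)
    (x : EuclideanSpace ℝ (Fin n)) (hx : ∀ i, x ≠ y i) (hgrad : gradient V x ≠ 0) :
    (0 < (p - 2) * (p + n - 2) / (p - 1) → pLap p V x ≤ 0) ∧
    ((p - 2) * (p + n - 2) / (p - 1) < 0 → 0 ≤ pLap p V x) ∧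
    ((p = 2 ∨ n = 1 ∨ p + n = 2) → pLap p V x = 0) := by
  subst hV
  have hderiv : ∀ r : ℝ, 0 < r → HasDerivAt v (-c * r ^ ((1 - n) / (p - 1))) r := fun r hr =>
    hv' r hr ▸ ((hv.contDiffAt (Ioi_mem_nhds hr)).differentiableAt two_ne_zero).hasDerivAt
  rw [pLap_superposition hp hderiv a y hx hgrad]
  set G := gradient (fun z => ∑ i, a i * v ‖z - y i‖) x
  set K := (p - 2) * (p + n - 2) / (p - 1) with hK
  set S := ‖G‖ ^ (p - 2) * ∑ i, a i * ‖x - y i‖ ^ ((1 - n) / (p - 1) - 1) *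
    Real.sin (InnerProductGeometry.angle (x - y i) G) ^ 2 with hS
  have hS_nonneg : 0 ≤ S := by
    refine mul_nonneg (by positivity) (Finset.sum_nonneg fun i _ => ?_)
    have := ha i
    positivity
  refine ⟨fun hKpos => ?_, fun hKneg => ?_, ?_⟩
  · exact mul_nonpos_of_nonpos_of_nonneg (neg_nonpos.2 (mul_nonneg hc.le hKpos.le)) hS_nonneg
  · exact mul_nonneg (neg_nonneg.2 (mul_nonpos_of_nonneg_of_nonpos hc.le hKneg.le)) hS_nonneg
  rintro (rfl | rfl | hpn)
  · simp [hK]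
  · simp [hS, sin_angle_eq_zero_of_fin_one (sub_ne_zero.2 (hx _)) hgrad]
  · simp [hK, show p + n - 2 = 0 by linarith]

/-- the p-Laplacian of a superposition `V(x) = Σ aᵢ w(x − yᵢ)` of
translates of the fundamental solution has constant sign wherever it is defined:
(a) if `(p−2)(p+n−2)/(p−1) > 0` then `Δ_p V ≤ 0`;
(b) if `(p−2)(p+n−2)/(p−1) < 0` then `Δ_p V ≥ 0`;
(c) if `p = 2`, or `n = 1`, or `p + n = 2`, then `Δ_p V = 0`. -/
theorem stmt5 {n : ℕ} (hn : 1 ≤ n) (p c : ℝ) (hp : p ≠ 1) (hc : 0 < c)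
    (v : ℝ → ℝ) (hv : ContDiffOn ℝ 2 v (Set.Ioi 0))
    (hv' : ∀ r : ℝ, 0 < r → deriv v r = -c * r ^ ((1 - n) / (p - 1)))
    (N : ℕ) (hN : 1 ≤ N) (a : Fin N → ℝ) (ha : ∀ i, 0 < a i)
    (y : Fin N → EuclideanSpace ℝ (Fin n))
    (V : EuclideanSpace ℝ (Fin n) → ℝ) (hV : V = fun z => ∑ i, a i * v ‖z - y i‖)
    (x : EuclideanSpace ℝ (Fin n)) (hx : ∀ i, x ≠ y i) (hgrad : gradient V x ≠ 0) :
    (0 < (p - 2) * (p + n - 2) / (p - 1) → pLap p V x ≤ 0) ∧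
    ((p - 2) * (p + n - 2) / (p - 1) < 0 → 0 ≤ pLap p V x) ∧
    ((p = 2 ∨ n = 1 ∨ p + n = 2) → pLap p V x = 0) :=
  stmt5_general p c hp hc v hv hv' N a ha y V hV x hx hgrad
end

section
/- Let n ≥ 1 and p > 2. Let c > 0 and let w be the fundamental solution of the p-Laplace equation, i.e. w(x) = v(|x|) with v'(r) = −c·r^{(1−n)/(p−1)}. Let a_1,…,a_N > 0, y_1,…,y_N ∈ ℝⁿ, and V(x) := Σ_{i=1}^N a_i w(x − y_i). Let K : ℝⁿ → ℝ be a concave C² function. Then at every point x with x ≠ y_i for all i and ∇(V+K)(x) ≠ 0, one has Δ_p(V + K)(x) ≤ 0. -/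
open Filter Topology RealInnerProductSpace

/-!
At a point where `g = ∇(V + K)(x) ≠ 0`, `Δ_p (V + K)(x) = |g|^{p-2} L_g(D²(V + K)(x))`, where
`L_g(Q) = (p - 2) Q(g) / |g|² + tr Q` is linear in the quadratic form `Q`. So it suffices that
`L_g` (with `g` the gradient of the whole sum) is nonpositive on the Hessian of every summand.
For `K` the Hessian is negative semidefinite and `p ≥ 2`. For `z ↦ v(|z - y|)` with `r = |x - y|`
and `e = (x - y)/r`, the Hessian is `v''(r) ⟨e, ξ⟩² + v'(r)/r (|ξ|² - ⟨e, ξ⟩²)`; its value under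
`L_g` is affine and nondecreasing in `s = ⟨e, g⟩²/|g|² ∈ [0, 1]` because `v'' ≥ v'/r`, and at
`s = 1` it equals `-c r^{α-1} ((p - 1) α + n - 1) = 0` for `α = (1 - n)/(p - 1)`, which is the
`p`-harmonicity of the fundamental solution away from its pole.
-/

lemma HasDerivAt.norm {F : Type*} [NormedAddCommGroup F] [InnerProductSpace ℝ F]
    {f : ℝ → F} {f' : F} {t : ℝ} (hf : HasDerivAt f f' t) (h0 : f t ≠ 0) :
    HasDerivAt (fun s => ‖f s‖) (⟪f t, f'⟫ / ‖f t‖) t := by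
  have hsq : 0 < ‖f t‖ ^ 2 := by positivity
  convert hf.norm_sq.sqrt hsq.ne' using 1
  · simp [Real.sqrt_sq (norm_nonneg _)]
  · rw [Real.sqrt_sq (norm_nonneg _)]; ring

lemma deriv_deriv_eq_of_deriv_eq_rpow {v : ℝ → ℝ} {c α : ℝ}
    (hv' : ∀ r : ℝ, 0 < r → deriv v r = -c * r ^ α) {r : ℝ} (hr : 0 < r) :
    deriv (deriv v) r = -c * (α * r ^ (α - 1)) := by
  have h : deriv v =ᶠ[𝓝 r] fun s => -c * s ^ α :=
    eventually_of_mem (Ioi_mem_nhds hr) fun s hs => hv' s hs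
  rw [h.deriv_eq, ((Real.hasDerivAt_rpow_const (Or.inl hr.ne')).const_mul (-c)).deriv]

section

variable {n : ℕ}

lemma hess_add {u w : EuclideanSpace ℝ (Fin n) → ℝ} {x : EuclideanSpace ℝ (Fin n)}
    (hu : ContDiffAt ℝ 2 u x) (hw : ContDiffAt ℝ 2 w x) (ξ η : EuclideanSpace ℝ (Fin n)) :
    hess (fun z => u z + w z) x ξ η = hess u x ξ η + hess w x ξ η := by
  simp only [hess, fun_iteratedFDeriv_add_apply hu hw, add_apply]

lemma hess_sum_mul {ι : Type*} (s : Finset ι) (a : ι → ℝ) {u : ι → EuclideanSpace ℝ (Fin n) → ℝ}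
    {x : EuclideanSpace ℝ (Fin n)} (hu : ∀ i ∈ s, ContDiffAt ℝ 2 (u i) x)
    (ξ η : EuclideanSpace ℝ (Fin n)) :
    hess (fun z => ∑ i ∈ s, a i * u i z) x ξ η = ∑ i ∈ s, a i * hess (u i) x ξ η := by
  simp only [hess, ← smul_eq_mul (a _)]
  rw [iteratedFDeriv_fun_sum_apply fun i hi => (hu i hi).const_smul (a i)]
  simp only [sum_apply]
  refine Finset.sum_congr rfl fun i hi => ?_
  rw [iteratedFDeriv_const_smul_apply' (hu i hi), smul_apply]

lemma hess_eq_deriv_deriv {φ : EuclideanSpace ℝ (Fin n) → ℝ} {x : EuclideanSpace ℝ (Fin n)}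
    (hφ : ContDiffAt ℝ 2 φ x) (ξ : EuclideanSpace ℝ (Fin n)) :
    hess φ x ξ ξ = deriv (deriv fun t : ℝ => φ (x + t • ξ)) 0 := by
  have hline : ∀ᶠ t : ℝ in 𝓝 0, ContDiffAt ℝ 2 φ (x + t • ξ) := by
    have : Tendsto (fun t : ℝ => x + t • ξ) (𝓝 0) (𝓝 x) :=
      (by fun_prop : Continuous fun t : ℝ => x + t • ξ).tendsto' 0 x (by simp)
    exact this.eventually (hφ.eventually (by simp))
  have hderiv : deriv (fun t : ℝ => φ (x + t • ξ)) =ᶠ[𝓝 0]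
      fun t => iteratedFDeriv ℝ 1 φ (x + t • ξ) fun _ => ξ := by
    filter_upwards [hline] with t ht
    simpa using (ht.of_le (by norm_num) : ContDiffAt ℝ ((0 : ℕ) + 1) φ _).deriv_fderiv_add_smul
  have h2 : ![ξ, ξ] = fun _ => ξ := by ext i; fin_cases i <;> rfl
  have hφ' : ContDiffAt ℝ ((1 : ℕ) + 1) φ (x + (0 : ℝ) • ξ) := by
    simpa [one_add_one_eq_two] using hφ
  rw [hderiv.deriv_eq, hφ'.deriv_fderiv_add_smul, hess, h2]
  simp

lemma ConcaveOn.hess_nonpos {K : EuclideanSpace ℝ (Fin n) → ℝ} (hK : ConcaveOn ℝ Set.univ K)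
    (hK2 : ContDiff ℝ 2 K) (x ξ : EuclideanSpace ℝ (Fin n)) : hess K x ξ ξ ≤ 0 := by
  set k : ℝ → ℝ := fun t => K (x + t • ξ)
  have hk2 : ContDiff ℝ 2 k := hK2.comp (by fun_prop)
  have hk : ConcaveOn ℝ Set.univ k := by
    simpa [Function.comp_def, AffineMap.lineMap_apply, add_comm] using
      hK.comp_affineMap (AffineMap.lineMap x (x + ξ))
  rw [hess_eq_deriv_deriv hK2.contDiffAt]
  exact Antitone.deriv_nonpos <| antitoneOn_univ.mp <|
    hk.antitoneOn_deriv fun t _ => (hk2.differentiable two_ne_zero) t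

lemma hess_comp_norm_sub {f : ℝ → ℝ} {x y : EuclideanSpace ℝ (Fin n)} (hxy : x ≠ y)
    (hf : ContDiffAt ℝ 2 f ‖x - y‖) (ξ : EuclideanSpace ℝ (Fin n)) :
    hess (fun z => f ‖z - y‖) x ξ ξ =
      deriv (deriv f) ‖x - y‖ * ⟪‖x - y‖⁻¹ • (x - y), ξ⟫ ^ 2 +
        deriv f ‖x - y‖ / ‖x - y‖ * (‖ξ‖ ^ 2 - ⟪‖x - y‖⁻¹ • (x - y), ξ⟫ ^ 2) := by
  set w := x - y
  have hw : w ≠ 0 := sub_ne_zero.mpr hxy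
  have hr : 0 < ‖w‖ := norm_pos_iff.mpr hw
  have hline : ∀ t : ℝ, HasDerivAt (fun s : ℝ => w + s • ξ) ξ t := fun t => by
    simpa using ((hasDerivAt_id t).smul_const ξ).const_add w
  have hcont : Continuous fun t : ℝ => w + t • ξ := by fun_prop
  have hne : ∀ᶠ t : ℝ in 𝓝 0, w + t • ξ ≠ 0 :=
    hcont.continuousAt.eventually_ne (by simpa using hw)
  have hdiff : ∀ᶠ t : ℝ in 𝓝 0, DifferentiableAt ℝ f ‖w + t • ξ‖ := by
    have : Tendsto (fun t : ℝ => ‖w + t • ξ‖) (𝓝 0) (𝓝 ‖w‖) :=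
      hcont.norm.tendsto' 0 _ (by simp)
    exact this.eventually ((hf.eventually (by simp)).mono fun r hr => hr.differentiableAt
      two_ne_zero)
  have hderiv : deriv (fun t : ℝ => f ‖x + t • ξ - y‖) =ᶠ[𝓝 0]
      fun t => deriv f ‖w + t • ξ‖ * (⟪w + t • ξ, ξ⟫ / ‖w + t • ξ‖) := by
    filter_upwards [hne, hdiff] with t ht hft
    simp only [add_sub_right_comm x, w]
    exact (hft.hasDerivAt.comp t ((hline t).norm ht)).deriv
  have hρ : HasDerivAt (fun t : ℝ => ‖w + t • ξ‖) (⟪w, ξ⟫ / ‖w‖) 0 := by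
    simpa using (hline 0).norm (by simpa using hw)
  have hf' : HasDerivAt (fun t : ℝ => deriv f ‖w + t • ξ‖)
      (deriv (deriv f) ‖w‖ * (⟪w, ξ⟫ / ‖w‖)) 0 :=
    ((hf.derivWithin (m := 1) (by norm_num)).differentiableAt one_ne_zero).hasDerivAt.comp_of_eq 0
      hρ (by simp)
  have hq : HasDerivAt (fun t : ℝ => ⟪w + t • ξ, ξ⟫ / ‖w + t • ξ‖)
      ((‖ξ‖ ^ 2 * ‖w‖ - ⟪w, ξ⟫ * (⟪w, ξ⟫ / ‖w‖)) / ‖w‖ ^ 2) 0 := by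
    have h := ((hline 0).inner ℝ (hasDerivAt_const 0 ξ)).fun_div hρ (by simpa using hr.ne')
    simpa [real_inner_self_eq_norm_sq] using h
  have hφ : ContDiffAt ℝ 2 (fun z => f ‖z - y‖) x :=
    hf.comp x ((contDiffAt_norm ℝ hw).comp x (contDiffAt_id.sub contDiffAt_const))
  rw [hess_eq_deriv_deriv hφ, hderiv.deriv_eq, (hf'.fun_mul hq).deriv]
  simp only [real_inner_smul_left, zero_smul, add_zero]
  field_simp

noncomputable def pLapForm (p : ℝ) (g : EuclideanSpace ℝ (Fin n)) :
    (EuclideanSpace ℝ (Fin n) → ℝ) →ₗ[ℝ] ℝ where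
  toFun Q := (p - 2) * Q g / ‖g‖ ^ 2 + ∑ i, Q (EuclideanSpace.single i 1)
  map_add' Q R := by simp only [Pi.add_apply, Finset.sum_add_distrib]; ring
  map_smul' a Q := by
    simp only [Pi.smul_apply, smul_eq_mul, RingHom.id_apply, ← Finset.mul_sum]; ring

lemma pLap_eq_pLapForm (p : ℝ) (u : EuclideanSpace ℝ (Fin n) → ℝ) (x : EuclideanSpace ℝ (Fin n)) :
    pLap p u x = ‖gradient u x‖ ^ (p - 2) * pLapForm p (gradient u x) (fun ξ => hess u x ξ ξ) :=
  rfl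

lemma pLapForm_nonpos {p : ℝ} (hp : 2 ≤ p) (g : EuclideanSpace ℝ (Fin n))
    {Q : EuclideanSpace ℝ (Fin n) → ℝ} (hQ : ∀ ξ, Q ξ ≤ 0) : pLapForm p g Q ≤ 0 :=
  add_nonpos (div_nonpos_of_nonpos_of_nonneg (mul_nonpos_of_nonneg_of_nonpos (by linarith) (hQ g))
    (by positivity)) (Finset.sum_nonpos fun i _ => hQ _)

lemma pLapForm_radial (p A B : ℝ) {e g : EuclideanSpace ℝ (Fin n)} (he : ‖e‖ = 1) (hg : g ≠ 0) :
    pLapForm p g (fun ξ => A * ⟪e, ξ⟫ ^ 2 + B * (‖ξ‖ ^ 2 - ⟪e, ξ⟫ ^ 2)) =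
      (p - 2) * (B + (A - B) * (⟪e, g⟫ ^ 2 / ‖g‖ ^ 2)) + A + (n - 1) * B := by
  have hbasis : ∑ i : Fin n, ⟪e, EuclideanSpace.single i (1 : ℝ)⟫ ^ 2 = 1 := by
    simpa [he] using (EuclideanSpace.basisFun (Fin n) ℝ).sum_sq_inner_left e
  have hg2 : ‖g‖ ^ 2 ≠ 0 := by positivity
  simp only [pLapForm, LinearMap.coe_mk, AddHom.coe_mk, PiLp.norm_single, norm_one,
    one_pow, mul_sub, mul_one, Finset.sum_add_distrib, Finset.sum_sub_distrib, ← Finset.mul_sum,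
    hbasis, Finset.sum_const, Finset.card_univ, Fintype.card_fin, nsmul_eq_mul]
  field_simp
  ring

lemma pLapForm_radial_nonpos {p A B : ℝ} (hp : 2 ≤ p) {e g : EuclideanSpace ℝ (Fin n)}
    (he : ‖e‖ = 1) (hg : g ≠ 0) (hBA : B ≤ A) (hpn : (p - 1) * A + (n - 1) * B ≤ 0) :
    pLapForm p g (fun ξ => A * ⟪e, ξ⟫ ^ 2 + B * (‖ξ‖ ^ 2 - ⟪e, ξ⟫ ^ 2)) ≤ 0 := by
  have hs : ⟪e, g⟫ ^ 2 / ‖g‖ ^ 2 ≤ 1 := by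
    rw [div_le_one (by positivity), sq_le_sq, abs_norm]
    simpa [he] using abs_real_inner_le_norm e g
  have hpAB : 0 ≤ (p - 2) * (A - B) := mul_nonneg (by linarith) (sub_nonneg.mpr hBA)
  rw [pLapForm_radial p A B he hg]
  nlinarith [mul_le_mul_of_nonneg_left hs hpAB]

lemma pLapForm_hess_fundamental_nonpos {p c : ℝ} (hp : 2 ≤ p) (hc : 0 ≤ c) {v : ℝ → ℝ}
    (hv : ContDiffOn ℝ 2 v (Set.Ioi 0))
    (hv' : ∀ r : ℝ, 0 < r → deriv v r = -c * r ^ ((1 - n) / (p - 1)))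
    {x y g : EuclideanSpace ℝ (Fin n)} (hxy : x ≠ y) (hg : g ≠ 0) :
    pLapForm p g (fun ξ => hess (fun z => v ‖z - y‖) x ξ ξ) ≤ 0 := by
  have hr : 0 < ‖x - y‖ := norm_pos_iff.mpr (sub_ne_zero.mpr hxy)
  set α : ℝ := (1 - n) / (p - 1)
  have hα : (p - 1) * α = 1 - n := by simp only [α]; field_simp [show p - 1 ≠ 0 by linarith]
  have hα1 : α ≤ 1 := by
    rw [div_le_one (by linarith)]; linarith [(Nat.cast_nonneg n : (0 : ℝ) ≤ n)]
  have hA : deriv (deriv v) ‖x - y‖ = -c * α * ‖x - y‖ ^ (α - 1) := by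
    rw [deriv_deriv_eq_of_deriv_eq_rpow hv' hr]; ring
  have hB : deriv v ‖x - y‖ / ‖x - y‖ = -c * ‖x - y‖ ^ (α - 1) := by
    rw [hv' _ hr, Real.rpow_sub_one hr.ne']; ring
  have hβ : 0 ≤ c * ‖x - y‖ ^ (α - 1) := mul_nonneg hc (by positivity)
  simp only [hess_comp_norm_sub hxy (hv.contDiffAt (Ioi_mem_nhds hr))]
  refine pLapForm_radial_nonpos hp (norm_smul_inv_norm (sub_ne_zero.mpr hxy)) hg ?_ ?_
  · rw [hA, hB]; nlinarith
  · rw [hA, hB]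
    linear_combination (-c * ‖x - y‖ ^ (α - 1)) * hα

end

theorem stmt6_general {n : ℕ} (p c : ℝ) (hp : 2 < p) (hc : 0 < c)
    (v : ℝ → ℝ) (hv : ContDiffOn ℝ 2 v (Set.Ioi 0))
    (hv' : ∀ r : ℝ, 0 < r → deriv v r = -c * r ^ ((1 - n) / (p - 1)))
    (N : ℕ) (a : Fin N → ℝ) (ha : ∀ i, 0 < a i)
    (y : Fin N → EuclideanSpace ℝ (Fin n))
    (V : EuclideanSpace ℝ (Fin n) → ℝ) (hV : V = fun z => ∑ i, a i * v ‖z - y i‖)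
    (K : EuclideanSpace ℝ (Fin n) → ℝ)
    (hK : ConcaveOn ℝ Set.univ K) (hK2 : ContDiff ℝ 2 K)
    (x : EuclideanSpace ℝ (Fin n)) (hx : ∀ i, x ≠ y i)
    (hgrad : gradient (fun z => V z + K z) x ≠ 0) :
    pLap p (fun z => V z + K z) x ≤ 0 := by
  subst hV
  have hφ : ∀ i, ContDiffAt ℝ 2 (fun z => v ‖z - y i‖) x := fun i =>
    (hv.contDiffAt (Ioi_mem_nhds (norm_pos_iff.mpr (sub_ne_zero.mpr (hx i))))).comp x
      ((contDiffAt_norm ℝ (sub_ne_zero.mpr (hx i))).comp x (contDiffAt_id.sub contDiffAt_const))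
  have hV2 : ContDiffAt ℝ 2 (fun z => ∑ i, a i * v ‖z - y i‖) x :=
    ContDiffAt.sum fun i _ => contDiffAt_const.mul (hφ i)
  have hsplit : (fun ξ => hess (fun z => (∑ i, a i * v ‖z - y i‖) + K z) x ξ ξ) =
      ∑ i, a i • (fun ξ => hess (fun z => v ‖z - y i‖) x ξ ξ) + fun ξ => hess K x ξ ξ := by
    ext ξ
    rw [hess_add hV2 hK2.contDiffAt, hess_sum_mul _ _ fun i _ => hφ i]
    simp
  rw [pLap_eq_pLapForm, hsplit, map_add, map_sum]
  refine mul_nonpos_of_nonneg_of_nonpos (by positivity) (add_nonpos ?_ ?_)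
  · refine Finset.sum_nonpos fun i _ => ?_
    rw [map_smul, smul_eq_mul]
    exact mul_nonpos_of_nonneg_of_nonpos (ha i).le
      (pLapForm_hess_fundamental_nonpos hp.le hc.le hv hv' (hx i) hgrad)
  · exact pLapForm_nonpos hp.le _ fun ξ => hK.hess_nonpos hK2 x ξ

/-- for `p > 2`, the superposition `V(x) = Σ aᵢ w(x − yᵢ)` of translates
of the fundamental solution plus a concave `C²` function `K` satisfies
`Δ_p(V + K)(x) ≤ 0` wherever `x ≠ yᵢ` for all `i` and `∇(V+K)(x) ≠ 0`. -/
theorem stmt6 {n : ℕ} (hn : 1 ≤ n) (p c : ℝ) (hp : 2 < p) (hc : 0 < c)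
    (v : ℝ → ℝ) (hv : ContDiffOn ℝ 2 v (Set.Ioi 0))
    (hv' : ∀ r : ℝ, 0 < r → deriv v r = -c * r ^ ((1 - n) / (p - 1)))
    (N : ℕ) (hN : 1 ≤ N) (a : Fin N → ℝ) (ha : ∀ i, 0 < a i)
    (y : Fin N → EuclideanSpace ℝ (Fin n))
    (V : EuclideanSpace ℝ (Fin n) → ℝ) (hV : V = fun z => ∑ i, a i * v ‖z - y i‖)
    (K : EuclideanSpace ℝ (Fin n) → ℝ)
    (hK : ConcaveOn ℝ Set.univ K) (hK2 : ContDiff ℝ 2 K)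
    (x : EuclideanSpace ℝ (Fin n)) (hx : ∀ i, x ≠ y i)
    (hgrad : gradient (fun z => V z + K z) x ≠ 0) :
    pLap p (fun z => V z + K z) x ≤ 0 :=
  stmt6_general p c hp hc v hv hv' N a ha y V hV K hK hK2 x hx hgrad
end

section
/- Let n ≥ 1 and p > 2. Let f_1,…,f_N : ℝⁿ → ℝ be twice differentiable at a point x ∈ ℝⁿ, and for each i let λ_1^i ≤ λ_2^i ≤ … ≤ λ_n^i be the eigenvalues of the (symmetric) Hessian matrix Hf_i(x). If λ_1^i + … + λ_{n−1}^i + (p−1)·λ_n^i ≤ 0 for every i, then, provided ∇(Σ_i f_i)(x) ≠ 0, one has Δ_p(Σ_{i=1}^N f_i)(x) ≤ 0. -/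
/-!
Hessians are additive in the function, so the bracket in `Δ_p(Σᵢ fᵢ)` is the sum over `i` of
`(p−2)⟨∇u, Hfᵢ ∇u⟩/|∇u|² + Δfᵢ` with `u = Σᵢ fᵢ`. Expanding `Hfᵢ` in its orthonormal eigenbasis
gives `Δfᵢ = λ₁ⁱ + ⋯ + λₙⁱ` and the Rayleigh bound `⟨v, Hfᵢ v⟩ ≤ λₙⁱ|v|²`, so each summand is at
most `λ₁ⁱ + ⋯ + λ_{n−1}ⁱ + (p−1)λₙⁱ ≤ 0`.
-/

open Filter Topology RealInnerProductSpace

section Eigenbasis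

variable {E ι : Type*} [NormedAddCommGroup E] [InnerProductSpace ℝ E] [Fintype ι]
  {B : E →L[ℝ] E →L[ℝ] ℝ} {b : OrthonormalBasis ι ℝ E} {lam : ι → ℝ}

theorem bilin_apply_eq_sum_eigen (heig : ∀ j w, B (b j) w = lam j * ⟪b j, w⟫) (v w : E) :
    B v w = ∑ j, lam j * (⟪b j, v⟫ * ⟪b j, w⟫) := by
  conv_lhs => rw [← b.sum_repr' v]
  simp only [map_sum, map_smul, sum_apply, smul_apply, smul_eq_mul, heig]
  exact Finset.sum_congr rfl fun j _ => by ring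

theorem sum_bilin_apply_self_eq_sum_eigen {κ : Type*} [Fintype κ]
    (heig : ∀ j w, B (b j) w = lam j * ⟪b j, w⟫) (e : OrthonormalBasis κ ℝ E) :
    ∑ k, B (e k) (e k) = ∑ j, lam j := by
  simp only [bilin_apply_eq_sum_eigen heig]
  rw [Finset.sum_comm]
  refine Finset.sum_congr rfl fun j _ => ?_
  have hnorm : ∑ k, ⟪b j, e k⟫ * ⟪e k, b j⟫ = 1 := by
    rw [e.sum_inner_mul_inner, real_inner_self_eq_norm_sq, b.orthonormal.1 j, one_pow]
  simp_rw [← Finset.mul_sum, real_inner_comm (e _) (b j)] at hnorm ⊢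
  rw [hnorm, mul_one]

theorem bilin_apply_self_le_of_eigen_le (heig : ∀ j w, B (b j) w = lam j * ⟪b j, w⟫)
    {c : ℝ} (hc : ∀ j, lam j ≤ c) (v : E) : B v v ≤ c * ‖v‖ ^ 2 := by
  rw [bilin_apply_eq_sum_eigen heig, ← real_inner_self_eq_norm_sq, ← b.sum_inner_mul_inner v v,
    Finset.mul_sum]
  refine Finset.sum_le_sum fun j _ => ?_
  rw [real_inner_comm v (b j)]
  exact mul_le_mul_of_nonneg_right (hc j) (mul_self_nonneg _)

end Eigenbasis

section Hessian

variable {n : ℕ}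

theorem hess_eq_fderiv_fderiv (u : EuclideanSpace ℝ (Fin n) → ℝ)
    (x v w : EuclideanSpace ℝ (Fin n)) :
    hess u x v w = fderiv ℝ (fderiv ℝ u) x v w := by
  simp [hess, iteratedFDeriv_two_apply]

theorem hess_sum {ι : Type*} {s : Finset ι} {f : ι → EuclideanSpace ℝ (Fin n) → ℝ}
    {x : EuclideanSpace ℝ (Fin n)} (hf1 : ∀ i ∈ s, ∀ᶠ z in 𝓝 x, DifferentiableAt ℝ (f i) z)
    (hf2 : ∀ i ∈ s, DifferentiableAt ℝ (fderiv ℝ (f i)) x) (v w : EuclideanSpace ℝ (Fin n)) :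
    hess (fun z => ∑ i ∈ s, f i z) x v w = ∑ i ∈ s, hess (f i) x v w := by
  have hderiv : fderiv ℝ (fun z => ∑ i ∈ s, f i z) =ᶠ[𝓝 x] fun z => ∑ i ∈ s, fderiv ℝ (f i) z :=
    (eventually_all_finset s).2 hf1 |>.mono fun z hz => fderiv_fun_sum hz
  simp only [hess_eq_fderiv_fderiv, hderiv.fderiv_eq, fderiv_fun_sum hf2, sum_apply]

theorem lap_sum {ι : Type*} {s : Finset ι} {f : ι → EuclideanSpace ℝ (Fin n) → ℝ}
    {x : EuclideanSpace ℝ (Fin n)} (hf1 : ∀ i ∈ s, ∀ᶠ z in 𝓝 x, DifferentiableAt ℝ (f i) z)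
    (hf2 : ∀ i ∈ s, DifferentiableAt ℝ (fderiv ℝ (f i)) x) :
    lap (fun z => ∑ i ∈ s, f i z) x = ∑ i ∈ s, lap (f i) x := by
  simp only [lap, hess_sum hf1 hf2]
  exact Finset.sum_comm

variable {u : EuclideanSpace ℝ (Fin n) → ℝ} {x : EuclideanSpace ℝ (Fin n)}
  {b : OrthonormalBasis (Fin n) ℝ (EuclideanSpace ℝ (Fin n))} {lam : Fin n → ℝ}

theorem lap_eq_sum_eigen (heig : ∀ j w, hess u x (b j) w = lam j * ⟪b j, w⟫) :
    lap u x = ∑ j, lam j := by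
  simp only [hess_eq_fderiv_fderiv] at heig
  simpa [lap, hess_eq_fderiv_fderiv] using
    sum_bilin_apply_self_eq_sum_eigen heig (EuclideanSpace.basisFun (Fin n) ℝ)

theorem hess_self_le_of_eigen_le (heig : ∀ j w, hess u x (b j) w = lam j * ⟪b j, w⟫)
    {c : ℝ} (hc : ∀ j, lam j ≤ c) (v : EuclideanSpace ℝ (Fin n)) :
    hess u x v v ≤ c * ‖v‖ ^ 2 := by
  simp only [hess_eq_fderiv_fderiv] at heig ⊢
  exact bilin_apply_self_le_of_eigen_le heig hc v

theorem mul_hess_div_add_lap_nonpos {p : ℝ} (hp : 2 ≤ p)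
    (heig : ∀ j w, hess u x (b j) w = lam j * ⟪b j, w⟫) {M : Fin n} (hM : ∀ j, lam j ≤ lam M)
    (hineq : (∑ j ∈ Finset.univ.erase M, lam j) + (p - 1) * lam M ≤ 0)
    {v : EuclideanSpace ℝ (Fin n)} (hv : v ≠ 0) :
    (p - 2) * hess u x v v / ‖v‖ ^ 2 + lap u x ≤ 0 := by
  have hv2 : 0 < ‖v‖ ^ 2 := by positivity
  have hquad : (p - 2) * hess u x v v / ‖v‖ ^ 2 ≤ (p - 2) * lam M := by
    rw [div_le_iff₀ hv2, mul_assoc]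
    exact mul_le_mul_of_nonneg_left (hess_self_le_of_eigen_le heig hM v) (by linarith)
  rw [lap_eq_sum_eigen heig, ← Finset.sum_erase_add _ _ (Finset.mem_univ M)]
  linarith

end Hessian

/-- if each `fᵢ` is twice differentiable at `x` with symmetric Hessian
having eigenvalues `λ₁ⁱ ≤ ⋯ ≤ λₙⁱ` (with orthonormal eigenbasis `b i`) satisfying
`λ₁ⁱ + ⋯ + λ_{n−1}ⁱ + (p−1)·λₙⁱ ≤ 0` for every `i`, then `Δ_p(Σᵢ fᵢ)(x) ≤ 0`,
provided `∇(Σᵢ fᵢ)(x) ≠ 0`. -/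
theorem stmt7 {n : ℕ} (hn : 1 ≤ n) (p : ℝ) (hp : 2 < p) (N : ℕ)
    (f : Fin N → EuclideanSpace ℝ (Fin n) → ℝ) (x : EuclideanSpace ℝ (Fin n))
    (hf1 : ∀ i, ∀ᶠ z in 𝓝 x, DifferentiableAt ℝ (f i) z)
    (hf2 : ∀ i, DifferentiableAt ℝ (fderiv ℝ (f i)) x)
    (b : Fin N → OrthonormalBasis (Fin n) ℝ (EuclideanSpace ℝ (Fin n)))
    (lam : Fin N → Fin n → ℝ) (hmono : ∀ i, Monotone (lam i))
    (heig : ∀ i j (w : EuclideanSpace ℝ (Fin n)),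
      hess (f i) x (b i j) w = lam i j * ⟪b i j, w⟫)
    (hineq : ∀ i,
      (∑ j ∈ Finset.univ.erase (⟨n - 1, by omega⟩ : Fin n), lam i j) +
        (p - 1) * lam i ⟨n - 1, by omega⟩ ≤ 0)
    (hgrad : gradient (fun z => ∑ i, f i z) x ≠ 0) :
    pLap p (fun z => ∑ i, f i z) x ≤ 0 := by
  have hf1' : ∀ i ∈ Finset.univ, ∀ᶠ z in 𝓝 x, DifferentiableAt ℝ (f i) z := fun i _ => hf1 i
  have hf2' : ∀ i ∈ Finset.univ, DifferentiableAt ℝ (fderiv ℝ (f i)) x := fun i _ => hf2 i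
  have htop : ∀ i j, lam i j ≤ lam i ⟨n - 1, by omega⟩ := fun i j =>
    hmono i (Fin.mk_le_mk.2 (by omega))
  refine mul_nonpos_of_nonneg_of_nonpos (Real.rpow_nonneg (norm_nonneg _) _) ?_
  rw [hess_sum hf1' hf2', lap_sum hf1' hf2', Finset.mul_sum, Finset.sum_div,
    ← Finset.sum_add_distrib]
  exact Finset.sum_nonpos fun i _ =>
    mul_hess_div_add_lap_nonpos hp.le (heig i) (htop i) (hineq i) hgrad
end

section
/- In ℝⁿ (n ≥ 1), let e₁ be the first standard basis vector and set y_i := e^{(−1)^i·i}·e₁ and a_i := 1/i² for i ∈ ℕ. Then the series Σ_{i=1}^∞ a_i·ln|y_i| = Σ_{i=1}^∞ (−1)^i/i converges, but for every x ∈ ℝⁿ with x ≠ 0 and x ≠ y_i for all i, the series Σ_{i=1}^∞ a_i·ln|x − y_i| diverges to +∞; hence the function −Σ_{i=1}^∞ a_i·ln|x − y_i| equals −∞ at every such x, even though it is finite at the origin. -/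
/-!
For even `i` the point `yᵢ` has norm `eⁱ`, far outside `x`, so `ln |x − yᵢ| ≥ i − O(1)` and the
`i`-th term is at least `1/i − O(1/i²)`; for odd `i` the points `yᵢ` tend to `0 ≠ x`, so
`ln |x − yᵢ|` is bounded below and the term is at least `−O(1/i²)`. The harmonic series over the
even integers diverges while `Σ 1/i²` converges.
-/

open Filter Topology Finset Real

theorem sum_Icc_one_eq_sum_range_succ {M : Type*} [AddCommMonoid M] {f : ℕ → M} (h0 : f 0 = 0)
    (N : ℕ) : ∑ i ∈ Icc 1 N, f i = ∑ i ∈ range (N + 1), f i := by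
  rw [range_eq_Ico, sum_eq_sum_Ico_succ_bot N.succ_pos, h0, zero_add, zero_add,
    Nat.succ_eq_add_one, Ico_add_one_right_eq_Icc]

theorem tendsto_sum_Icc_one_iff {M : Type*} [AddCommMonoid M] {f : ℕ → M} (h0 : f 0 = 0)
    {l : Filter M} :
    Tendsto (fun N => ∑ i ∈ Icc 1 N, f i) atTop l ↔
      Tendsto (fun N => ∑ i ∈ range N, f i) atTop l := by
  simp_rw [sum_Icc_one_eq_sum_range_succ h0]
  exact tendsto_add_atTop_iff_nat (f := fun N => ∑ i ∈ range N, f i) 1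

theorem exists_tendsto_sum_range_neg_one_pow_div :
    ∃ S, Tendsto (fun N => ∑ i ∈ range N, (-1 : ℝ) ^ i / i) atTop (𝓝 S) := by
  have hanti : Antitone fun i : ℕ => 1 / ((i : ℝ) + 1) := fun a b hab => by
    dsimp only
    gcongr
  obtain ⟨l, hl⟩ := hanti.tendsto_alternating_series_of_tendsto_zero
    tendsto_one_div_add_atTop_nhds_zero_nat
  refine ⟨-l, (tendsto_add_atTop_iff_nat 1).1 (hl.neg.congr fun N => ?_)⟩
  rw [sum_range_succ', ← sum_neg_distrib]
  simp [pow_succ, div_eq_mul_inv]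

theorem not_summable_ite_even_inv :
    ¬Summable fun i : ℕ => if Even i then (i : ℝ)⁻¹ else 0 := by
  intro h
  have h2 := h.comp_injective (mul_right_injective₀ two_ne_zero : Function.Injective (2 * ·))
  simp only [Function.comp_def, even_two_mul, if_true, Nat.cast_mul, Nat.cast_ofNat, mul_inv] at h2
  exact not_summable_natCast_inv ((summable_mul_left_iff (inv_ne_zero two_ne_zero)).1 h2)

theorem tendsto_sum_range_atTop_of_le_add {f g h : ℕ → ℝ} (hg0 : ∀ i, 0 ≤ g i)
    (hg : ¬Summable g) (hh : Summable h) (hfg : ∀ i, g i ≤ f i + h i) :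
    Tendsto (fun N => ∑ i ∈ range N, f i) atTop atTop := by
  have hG := (not_summable_iff_tendsto_nat_atTop_of_nonneg hg0).1 hg
  refine tendsto_atTop_mono (fun N => ?_) (hG.atTop_add hh.hasSum.tendsto_sum_nat.neg)
  simp only [← sub_eq_add_neg, ← sum_sub_distrib]
  exact sum_le_sum fun i _ => by linarith [hfg i]

theorem tendsto_sum_range_atTop_of_eventually_le_add {f g h : ℕ → ℝ} (hg0 : ∀ i, 0 ≤ g i)
    (hg : ¬Summable g) (hh : Summable h) (hfg : ∀ᶠ i in atTop, g i ≤ f i + h i) :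
    Tendsto (fun N => ∑ i ∈ range N, f i) atTop atTop := by
  obtain ⟨M, hM⟩ := eventually_atTop.1 hfg
  rw [← tendsto_add_atTop_iff_nat M]
  simp_rw [add_comm _ M, sum_range_add]
  refine tendsto_atTop_add_const_left _ _ (tendsto_sum_range_atTop_of_le_add (fun i => hg0 _)
    ?_ ?_ fun i => hM _ (by omega))
  · simpa only [add_comm M] using (summable_nat_add_iff M).not.2 hg
  · simpa only [add_comm M] using (summable_nat_add_iff M).2 hh

theorem log_norm_sub_log_two_le {E : Type*} [NormedAddCommGroup E] {a b : E}
    (ha : a ≠ 0) (h : 2 * ‖b‖ ≤ ‖a‖) : log ‖a‖ - log 2 ≤ log ‖a - b‖ := by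
  rw [← log_div (norm_ne_zero_iff.2 ha) two_ne_zero]
  exact log_le_log (by positivity) (by linarith [norm_sub_norm_le a b])

section

variable {E : Type*} [NormedAddCommGroup E] {y : ℕ → E}

-- At `i = 0` both sides vanish because `1 / 0 = 0`.
theorem one_div_sq_mul_log_norm_eq (hy : ∀ i, ‖y i‖ = exp ((-1) ^ i * i)) (i : ℕ) :
    1 / (i : ℝ) ^ 2 * log ‖y i‖ = (-1) ^ i / i := by
  rcases eq_or_ne i 0 with rfl | hi
  · simp
  · rw [hy, log_exp]
    field_simp

theorem eventually_le_log_norm_sub (hy : ∀ i, ‖y i‖ = exp ((-1) ^ i * i)) {x : E}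
    (hx : x ≠ 0) :
    ∃ c, ∀ᶠ i : ℕ in atTop, (if Even i then (i : ℝ) else 0) + c ≤ log ‖x - y i‖ := by
  have hr : 0 < ‖x‖ := norm_pos_iff.2 hx
  refine ⟨min 0 (log ‖x‖) - log 2, ?_⟩
  filter_upwards [(tendsto_exp_atTop.comp tendsto_natCast_atTop_atTop).eventually_ge_atTop
    (max (2 * ‖x‖) (2 / ‖x‖))] with i hi
  have hexp := exp_pos (i : ℝ)
  rcases Nat.even_or_odd i with he | ho
  · have hyi : ‖y i‖ = exp i := by rw [hy, he.neg_one_pow, one_mul]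
    have hyi0 : y i ≠ 0 := norm_ne_zero_iff.1 (by rw [hyi]; exact hexp.ne')
    calc (if Even i then (i : ℝ) else 0) + (min 0 (log ‖x‖) - log 2)
        ≤ log ‖y i‖ - log 2 := by
          rw [if_pos he, hyi, log_exp]; linarith [min_le_left 0 (log ‖x‖)]
      _ ≤ log ‖x - y i‖ := by
          rw [norm_sub_rev]
          exact log_norm_sub_log_two_le hyi0 (by rw [hyi]; exact le_of_max_le_left hi)
  · have hyi : ‖y i‖ = (exp i)⁻¹ := by rw [hy, ho.neg_one_pow, neg_one_mul, exp_neg]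
    calc (if Even i then (i : ℝ) else 0) + (min 0 (log ‖x‖) - log 2)
        ≤ log ‖x‖ - log 2 := by
          rw [if_neg (Nat.not_even_iff_odd.2 ho)]; linarith [min_le_right 0 (log ‖x‖)]
      _ ≤ log ‖x - y i‖ := by
          refine log_norm_sub_log_two_le hx ?_
          rw [hyi, ← div_eq_mul_inv, div_le_comm₀ hexp hr]
          exact le_of_max_le_right hi

theorem tendsto_sum_one_div_sq_mul_log_norm_sub_atTop (hy : ∀ i, ‖y i‖ = exp ((-1) ^ i * i))
    {x : E} (hx : x ≠ 0) :
    Tendsto (fun N => ∑ i ∈ range N, 1 / (i : ℝ) ^ 2 * log ‖x - y i‖) atTop atTop := by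
  obtain ⟨c, hc⟩ := eventually_le_log_norm_sub hy hx
  have hw : Summable fun i : ℕ => 1 / (i : ℝ) ^ 2 := summable_one_div_nat_pow.2 one_lt_two
  refine tendsto_sum_range_atTop_of_eventually_le_add (fun i => by split_ifs <;> positivity)
    not_summable_ite_even_inv (hw.mul_left c).neg ?_
  filter_upwards [hc] with i hi
  calc (if Even i then (i : ℝ)⁻¹ else 0) = 1 / (i : ℝ) ^ 2 * (if Even i then (i : ℝ) else 0) := by
        split_ifs
        · rcases eq_or_ne (i : ℝ) 0 with h | h
          · simp [h]
          · field_simp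
        · simp
    _ ≤ 1 / (i : ℝ) ^ 2 * (log ‖x - y i‖ - c) := by gcongr; linarith
    _ = _ := by ring

end

/-- with `yᵢ := e^{(−1)ⁱ·i}·e₁` and `aᵢ := 1/i²`, the series
`Σ aᵢ·ln|yᵢ| = Σ (−1)ⁱ/i` converges (partial sums tend to a finite limit), but for
every `x ≠ 0` with `x ≠ yᵢ` for all `i ≥ 1`, the series `Σ aᵢ·ln|x − yᵢ|` diverges
to `+∞`; hence `−Σ aᵢ·ln|x − yᵢ|` equals `−∞` at every such `x`, though it is finite
at the origin. -/
theorem stmt13 {n : ℕ} (hn : 1 ≤ n)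
    (y : ℕ → EuclideanSpace ℝ (Fin n))
    (hy : ∀ i : ℕ, y i =
      Real.exp ((-1 : ℝ) ^ i * i) • EuclideanSpace.single (⟨0, by omega⟩ : Fin n) (1 : ℝ)) :
    (∀ i : ℕ, 1 ≤ i → (1 / (i : ℝ) ^ 2) * Real.log ‖y i‖ = (-1 : ℝ) ^ i / i) ∧
    (∃ S : ℝ, Tendsto
      (fun N : ℕ => ∑ i ∈ Finset.Icc 1 N, (1 / (i : ℝ) ^ 2) * Real.log ‖y i‖)
      atTop (𝓝 S)) ∧
    (∀ x : EuclideanSpace ℝ (Fin n), x ≠ 0 → (∀ i : ℕ, 1 ≤ i → x ≠ y i) →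
      Tendsto (fun N : ℕ => ∑ i ∈ Finset.Icc 1 N, (1 / (i : ℝ) ^ 2) * Real.log ‖x - y i‖)
        atTop atTop) := by
  have hny : ∀ i, ‖y i‖ = exp ((-1) ^ i * i) := fun i => by simp [hy, norm_smul, abs_exp]
  have hlog := one_div_sq_mul_log_norm_eq hny
  refine ⟨fun i _ => hlog i, ?_, fun x hx _ => ?_⟩
  · obtain ⟨S, hS⟩ := exists_tendsto_sum_range_neg_one_pow_div
    exact ⟨S, (tendsto_sum_Icc_one_iff (by simp)).2 (by simpa only [hlog] using hS)⟩
  · exact (tendsto_sum_Icc_one_iff (by simp)).2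
      (tendsto_sum_one_div_sq_mul_log_norm_sub_atTop hny hx)
end

section
/- Let n ≥ 1, p > 2, c > 0, let 𝒲(x,t) := c·t^{−n/(p(p−1))}·exp(−((p−1)/p)·(1/p)^{1/(p−1)}·(|x|/t^{1/p})^{p/(p−1)}) for x ∈ ℝⁿ, t > 0, and fix y ∈ ℝⁿ with y ≠ 0. Define V(x,t) := 𝒲(x+y,t) + 𝒲(x−y,t). Then for every t > 0: (i) V(0,t) = 2·𝒲(y,t); (ii) the spatial gradient satisfies ∇_x V(0,t) = 0; and (iii) ∂_t(V(x,t)^{p−1})|_{x=0} = 2(p−1)·(2𝒲(y,t))^{p−2}·∂_t𝒲(y,t), a quantity which takes both strictly positive and strictly negative values as t ranges over (0,∞). In particular, the superposition V of two fundamental solutions is neither a supersolution nor a subsolution of the equation ∂_t(|u|^{p−2}u) = Δ_p u. -/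
/-!
`V` is even in `x`, so its spatial gradient vanishes at `0`, and `V(0,t) = 2𝒲(y,t)`. As a function
of `t`, `𝒲(y,t) = c t^(-α) exp(-B t^(-β))` with `α = n/(p(p-1))`, `β = 1/(p-1)` and `B > 0` (because
`y ≠ 0`), so `∂_t 𝒲(y,t) = 𝒲(y,t) t⁻¹ (Bβ t^(-β) - α)`. The bracket tends to `+∞` as `t → 0⁺` and
to `-α < 0` as `t → ∞` (because `n ≥ 1`), and the chain rule transfers its sign to `∂_t V(0,t)^(p-1)`.
-/

open Filter Topology

/-- The fundamental solution `𝒲(x,t)` of the homogeneous evolutionary p-Laplace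
equation `∂_t(|u|^{p−2}u) = Δ_p u`, written as a function of `|x|` and `t`. -/
noncomputable def Wfund {n : ℕ} (p c : ℝ) (x : EuclideanSpace ℝ (Fin n)) (t : ℝ) : ℝ :=
  c * t ^ (-((n : ℝ) / (p * (p - 1)))) *
    Real.exp (-((p - 1) / p) * (1 / p) ^ (1 / (p - 1)) * (‖x‖ / t ^ (1 / p)) ^ (p / (p - 1)))

/-- The superposition `V(x,t) = 𝒲(x+y,t) + 𝒲(x−y,t)` of two translated fundamental
solutions. -/
noncomputable def Vsup {n : ℕ} (p c : ℝ) (y x : EuclideanSpace ℝ (Fin n)) (t : ℝ) : ℝ :=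
  Wfund p c (x + y) t + Wfund p c (x - y) t

open Real

section EvenFunction

variable {E F : Type*} [NormedAddCommGroup E] [NormedSpace ℝ E]
  [NormedAddCommGroup F] [NormedSpace ℝ F]

theorem Function.Even.fderiv_zero {f : E → F} (hf : Function.Even f) : fderiv ℝ f 0 = 0 := by
  have hcomp : fderiv ℝ f 0 = -fderiv ℝ f 0 := by
    conv_lhs => rw [show f = f ∘ ContinuousLinearEquiv.neg ℝ from funext fun x => (hf x).symm]
    rw [ContinuousLinearEquiv.comp_right_fderiv]
    ext v
    simp
  have : IsAddTorsionFree (E →L[ℝ] F) := .of_isTorsionFree ℝ _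
  exact self_eq_neg.mp hcomp

theorem Function.Even.gradient_zero {H : Type*} [NormedAddCommGroup H] [InnerProductSpace ℝ H]
    [CompleteSpace H] {f : H → ℝ} (hf : Function.Even f) : gradient f 0 = 0 := by
  rw [gradient, hf.fderiv_zero, map_zero]

end EvenFunction

theorem hasDerivAt_mul_rpow_mul_exp_rpow (c α B β : ℝ) {t : ℝ} (ht : 0 < t) :
    HasDerivAt (fun s => c * s ^ (-α) * exp (-B * s ^ (-β)))
      (c * t ^ (-α) * exp (-B * t ^ (-β)) * t⁻¹ * (B * β * t ^ (-β) - α)) t := by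
  have hα := (hasDerivAt_rpow_const (p := -α) (Or.inl ht.ne')).const_mul c
  have hβ := ((hasDerivAt_rpow_const (p := -β) (Or.inl ht.ne')).const_mul (-B)).exp
  refine (hα.mul hβ).congr_deriv ?_
  rw [rpow_sub ht, rpow_sub ht, rpow_one]
  ring

theorem exists_pos_mul_rpow_neg_sub_pos {A β : ℝ} (α : ℝ) (hA : 0 < A) (hβ : 0 < β) :
    ∃ t, 0 < t ∧ 0 < A * t ^ (-β) - α := by
  have h : Tendsto (fun t : ℝ => A * t ^ (-β) - α) (𝓝[>] 0) atTop :=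
    tendsto_atTop_add_const_right _ _
      ((tendsto_rpow_neg_nhdsGT_zero (neg_neg_of_pos hβ)).const_mul_atTop hA)
  exact ((h.eventually_gt_atTop 0).and self_mem_nhdsWithin).exists.imp fun t ht => ⟨ht.2, ht.1⟩

theorem exists_pos_mul_rpow_neg_sub_neg {α β : ℝ} (A : ℝ) (hα : 0 < α) (hβ : 0 < β) :
    ∃ t, 0 < t ∧ A * t ^ (-β) - α < 0 := by
  have h : Tendsto (fun t : ℝ => A * t ^ (-β) - α) atTop (𝓝 (A * 0 - α)) :=
    ((tendsto_rpow_neg_atTop hβ).const_mul A).sub_const α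
  rw [mul_zero, zero_sub] at h
  exact ((h.eventually_lt_const (neg_neg_of_pos hα)).and (eventually_gt_atTop 0)).exists.imp
    fun t ht => ⟨ht.2, ht.1⟩

section FundamentalSolution

variable {n : ℕ} {p c t : ℝ} {y : EuclideanSpace ℝ (Fin n)}

/-- For `t > 0`, `Wfund p c y t = c t^(-n/(p(p-1))) exp(-(Wfund.rate p y) t^(-1/(p-1)))`. -/
noncomputable def Wfund.rate (p : ℝ) (y : EuclideanSpace ℝ (Fin n)) : ℝ :=
  (p - 1) / p * (1 / p) ^ (1 / (p - 1)) * ‖y‖ ^ (p / (p - 1))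

theorem Wfund.rate_pos (hp : 1 < p) (hy : y ≠ 0) : 0 < Wfund.rate p y := by
  have hp0 : 0 < p := by linarith
  have hp1 : 0 < p - 1 := by linarith
  unfold Wfund.rate
  have := norm_pos_iff.mpr hy
  positivity

theorem Wfund_neg (p c : ℝ) (x : EuclideanSpace ℝ (Fin n)) (t : ℝ) :
    Wfund p c (-x) t = Wfund p c x t := by
  rw [Wfund, Wfund, norm_neg]

theorem Wfund_pos (hc : 0 < c) (ht : 0 < t) : 0 < Wfund p c y t := by
  unfold Wfund
  positivity

theorem Wfund_eq_of_pos (hp : p ≠ 0) (ht : 0 < t) :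
    Wfund p c y t = c * t ^ (-((n : ℝ) / (p * (p - 1)))) *
      exp (-Wfund.rate p y * t ^ (-(1 / (p - 1)))) := by
  have hscale : (‖y‖ / t ^ (1 / p)) ^ (p / (p - 1)) =
      ‖y‖ ^ (p / (p - 1)) * t ^ (-(1 / (p - 1))) := by
    rw [div_rpow (norm_nonneg y) (rpow_nonneg ht.le _), ← rpow_mul ht.le, div_eq_mul_inv,
      ← rpow_neg ht.le, one_div_mul_eq_div, div_div_cancel_left' hp, one_div]
  rw [Wfund, hscale, Wfund.rate]
  ring_nf

theorem hasDerivAt_Wfund (hp : p ≠ 0) (ht : 0 < t) :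
    HasDerivAt (fun s => Wfund p c y s)
      (Wfund p c y t * t⁻¹ *
        (Wfund.rate p y * (1 / (p - 1)) * t ^ (-(1 / (p - 1))) - n / (p * (p - 1)))) t := by
  have hprofile := hasDerivAt_mul_rpow_mul_exp_rpow c (n / (p * (p - 1))) (Wfund.rate p y)
    (1 / (p - 1)) ht
  rw [← Wfund_eq_of_pos hp ht] at hprofile
  exact hprofile.congr_of_eventuallyEq <|
    eventually_of_mem (Ioi_mem_nhds ht) fun s hs => Wfund_eq_of_pos hp hs

theorem exists_deriv_Wfund_pos (hp : 1 < p) (hc : 0 < c) (hy : y ≠ 0) :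
    ∃ t, 0 < t ∧ 0 < deriv (fun s => Wfund p c y s) t := by
  have hβ : 0 < 1 / (p - 1) := one_div_pos.mpr (by linarith)
  obtain ⟨t, ht, hsign⟩ := exists_pos_mul_rpow_neg_sub_pos (n / (p * (p - 1)))
    (mul_pos (Wfund.rate_pos hp hy) hβ) hβ
  refine ⟨t, ht, ?_⟩
  rw [(hasDerivAt_Wfund (by linarith) ht).deriv]
  have := Wfund_pos (p := p) (y := y) hc ht
  positivity

theorem exists_deriv_Wfund_neg (hp : 1 < p) (hc : 0 < c) (hn : 1 ≤ n) :
    ∃ t, 0 < t ∧ deriv (fun s => Wfund p c y s) t < 0 := by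
  have hβ : 0 < 1 / (p - 1) := one_div_pos.mpr (by linarith)
  have hα : 0 < (n : ℝ) / (p * (p - 1)) := by
    have : (1 : ℝ) ≤ n := by exact_mod_cast hn
    have : 0 < p * (p - 1) := by nlinarith
    positivity
  obtain ⟨t, ht, hsign⟩ :=
    exists_pos_mul_rpow_neg_sub_neg (Wfund.rate p y * (1 / (p - 1))) hα hβ
  refine ⟨t, ht, ?_⟩
  rw [(hasDerivAt_Wfund (by linarith) ht).deriv]
  have := Wfund_pos (p := p) (y := y) hc ht
  exact mul_neg_of_pos_of_neg (by positivity) hsign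

theorem Vsup_zero (p c : ℝ) (y : EuclideanSpace ℝ (Fin n)) (t : ℝ) :
    Vsup p c y 0 t = 2 * Wfund p c y t := by
  rw [Vsup, zero_add, zero_sub, Wfund_neg, two_mul]

theorem Vsup_even (p c : ℝ) (y : EuclideanSpace ℝ (Fin n)) (t : ℝ) :
    Function.Even fun x => Vsup p c y x t := fun x => by
  simp only [Vsup]
  rw [show -x + y = -(x - y) by abel, show -x - y = -(x + y) by abel, Wfund_neg, Wfund_neg,
    add_comm]

theorem deriv_Vsup_zero_rpow (hp : 2 ≤ p) (ht : 0 < t) :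
    deriv (fun s => Vsup p c y 0 s ^ (p - 1)) t =
      2 * (p - 1) * (2 * Wfund p c y t) ^ (p - 2) * deriv (fun s => Wfund p c y s) t := by
  have hW :=
    (hasDerivAt_Wfund (p := p) (c := c) (y := y) (by linarith) ht).differentiableAt.hasDerivAt
  have hV := (hW.const_mul 2).rpow_const (p := p - 1) (Or.inr (by linarith))
  simp_rw [Vsup_zero]
  rw [hV.deriv, show p - 1 - 1 = p - 2 by ring]
  ring

end FundamentalSolution

/-- for `p > 2`, `c > 0`, `y ≠ 0` and `V(x,t) = 𝒲(x+y,t) + 𝒲(x−y,t)`,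
for every `t > 0`: (i) `V(0,t) = 2𝒲(y,t)`; (ii) `∇_x V(0,t) = 0`; (iii)
`∂_t(V^{p−1})|_{x=0} = 2(p−1)(2𝒲(y,t))^{p−2}·∂_t𝒲(y,t)`, and this quantity takes
both strictly positive and strictly negative values as `t` ranges over `(0,∞)`;
hence `V` is neither a supersolution nor a subsolution of `∂_t(|u|^{p−2}u) = Δ_p u`. -/
theorem stmt18 {n : ℕ} (hn : 1 ≤ n) (p c : ℝ) (hp : 2 < p) (hc : 0 < c)
    (y : EuclideanSpace ℝ (Fin n)) (hy : y ≠ 0) :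
    (∀ t : ℝ, 0 < t →
      Vsup p c y 0 t = 2 * Wfund p c y t ∧
      gradient (fun x => Vsup p c y x t) 0 = 0 ∧
      deriv (fun s => Vsup p c y 0 s ^ (p - 1)) t =
        2 * (p - 1) * (2 * Wfund p c y t) ^ (p - 2) * deriv (fun s => Wfund p c y s) t) ∧
    (∃ t₁ : ℝ, 0 < t₁ ∧ 0 < deriv (fun s => Vsup p c y 0 s ^ (p - 1)) t₁) ∧
    (∃ t₂ : ℝ, 0 < t₂ ∧ deriv (fun s => Vsup p c y 0 s ^ (p - 1)) t₂ < 0) := by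
  have hfactor : ∀ t, 0 < t → 0 < 2 * (p - 1) * (2 * Wfund p c y t) ^ (p - 2) := fun t ht => by
    have := Wfund_pos (p := p) (y := y) hc ht
    have : 0 < p - 1 := by linarith
    positivity
  refine ⟨fun t ht => ⟨Vsup_zero p c y t, (Vsup_even p c y t).gradient_zero,
    deriv_Vsup_zero_rpow hp.le ht⟩, ?_, ?_⟩
  · obtain ⟨t₁, ht₁, hpos⟩ := exists_deriv_Wfund_pos (p := p) (by linarith) hc hy
    exact ⟨t₁, ht₁, deriv_Vsup_zero_rpow hp.le ht₁ ▸ mul_pos (hfactor t₁ ht₁) hpos⟩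
  · obtain ⟨t₂, ht₂, hneg⟩ := exists_deriv_Wfund_neg (p := p) (y := y) (by linarith) hc hn
    exact ⟨t₂, ht₂, deriv_Vsup_zero_rpow hp.le ht₂ ▸ mul_neg_of_pos_of_neg (hfactor t₂ ht₂) hneg⟩
end
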